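/- Let D, B_f, B_{h,g} > 0 and let R^f = Q^f∘K^f and R^g = Q^g∘K^g be RNNs with input dimensions d_f, d'_f, output dimensions d'_f, d'_g, and hidden state sizes m_f, m_g, where the input dimension of R^g equals the output dimension d'_f of R^f. Assume (A1) ‖(R^f D x)[t]‖_∞ <= B_f for all x ∈ [-D,D]^{d_f} and all t ∈ ℕ₀, and (A2) ‖(K^g D y)[t]‖_∞ <= B_{h,g} for all y ∈ [-B_f, B_f]^{d'_f} and all t ∈ ℕ₀. Then there exists an RNN R = Q∘K with input dimension d_f, output dimension d'_g, and hidden state size m_f + 2d'_f + m_g + 5 such that: (i) for all x ∈ [-D,D]^{d_f} and all integers k >= 3, (R D x)[2^k - 2] = (R^g D ((R^f D x)[2^{k-1} - 2]))[2^{k-1} - 2]; (ii) there exist matrices M ∈ ℝ^{m_f×(m_f+2d'_f+m_g+5)} and W ∈ ℝ^{m_g×(m_f+2d'_f+m_g+5)} such that M(K D x)[t] = (K^f D x)[t] for all t ∈ ℕ₀ and W(K D x)[2^k - 2] = (K^g D ((R^f D x)[2^{k-1}-2]))[2^{k-1}-2] for all integers k >= 3; (iii) if additionally there are B_{h,f},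 B_g > 0 with ‖(K^f D x)[t]‖_∞ <= B_{h,f} for all x ∈ [-D,D]^{d_f}, t ∈ ℕ₀, and ‖(R^g D y)[t]‖_∞ <= B_g for all y ∈ [-B_f,B_f]^{d'_f}, t ∈ ℕ₀, then ‖(K D x)[t]‖_∞ <= max{2, B_f, B_{h,g}, B_{h,f}} and ‖(R D x)[t]‖_∞ <= B_g for all x ∈ [-D,D]^{d_f} and t ∈ ℕ₀. -/

import Mathlib

/-- ReLU applied componentwise. -/
noncomputable def relu {n : Type*} (v : n → ℝ) : n → ℝ := fun i => max 0 (v i)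

/-- An RNN with input index type `ι`, hidden state index type `κ`, output index type `ω`,
parametrized by weights `A_h, A_x, A_o, b_h, b_o`. -/
structure RNN (ι κ ω : Type) where
  Ah : Matrix κ κ ℝ
  Ax : Matrix κ ι ℝ
  Ao : Matrix ω κ ℝ
  bh : κ → ℝ
  bo : ω → ℝ

/-- Hidden state sequence `(K 𝒟 x)[t]` for the input sequence `(𝒟 x)[t] = x·1{t=0}`,
with the convention `h[-1] = 0`:  `h[0] = ρ(A_x x + b_h)`, `h[t+1] = ρ(A_h h[t] + b_h)`. -/
noncomputable def RNN.hid {ι κ ω : Type} [Fintype ι] [Fintype κ] (R : RNN ι κ ω)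
    (x : ι → ℝ) : ℕ → κ → ℝ
  | 0 => relu (R.Ax.mulVec x + R.bh)
  | t + 1 => relu (R.Ah.mulVec (RNN.hid R x t) + R.bh)

/-- Output sequence `(R 𝒟 x)[t] = A_o h[t] + b_o`. -/
noncomputable def RNN.out {ι κ ω : Type} [Fintype ι] [Fintype κ] (R : RNN ι κ ω)
    (x : ι → ℝ) (t : ℕ) : ω → ℝ :=
  R.Ao.mulVec (R.hid x t) + R.bo


/-!
The network runs `R^f` unchanged next to a five-neuron clock that pulses at the times
`0, 2, 6, 14, …`: after a pulse at `p` the next one is at `2p + 2`, so the pulses are the times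
`2^k - 2`. At a pulse the output of `R^f` is copied, split into positive and negative parts, into
two gate blocks, which a large negative input keeps at `0` otherwise, and the `R^g` block is reset
to `0` by a large negative input. One step later it reads the gates, which amounts to starting
`R^g` on the sampled output, and then it runs freely. Between the pulses `p` and `2p + 2` it thus
makes exactly `p` steps on the input sampled at `p`; for `p = 2^(k-1) - 2` this is (i) and (ii).
Every hidden neuron holds a coordinate of a state of `R^f`, of a state of `R^g` on an admissible
input, of the positive or negative part of an output of `R^f`, or a clock value in `[0, 2]`, which
gives (iii).

If `c` is the number of steps to the next pulse, the clock stores `2^-c` through the riser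
`2 (2^-c - 2^-t)` and the faller `2^-t`. Between pulses `2^-c` doubles; at a pulse `c` jumps from
`0` to `t + 1`, so the riser drops to exactly `0`, which a ReLU can produce.
-/

open Matrix

section Relu

variable {n m : Type*}

theorem relu_sumElim (a : n → ℝ) (b : m → ℝ) :
    relu (Sum.elim a b) = Sum.elim (relu a) (relu b) := by
  ext (i | i) <;> rfl

theorem relu_zero : relu (0 : n → ℝ) = 0 := by
  ext i; exact max_self 0

theorem relu_of_nonpos {v : n → ℝ} (h : v ≤ 0) : relu v = 0 := by
  ext i; exact max_eq_left (h i)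

theorem relu_sub_relu_neg (v : n → ℝ) : relu v - relu (-v) = v := by
  ext i
  simp only [relu, Pi.sub_apply, Pi.neg_apply]
  rcases le_total 0 (v i) with h | h <;> simp [h]

variable [Fintype n] [Fintype m]

theorem norm_relu_le (v : n → ℝ) : ‖relu v‖ ≤ ‖v‖ :=
  (pi_norm_le_iff_of_nonneg (norm_nonneg v)).2 fun i =>
    (abs_max_le_max_abs_abs.trans (by simp)).trans (norm_le_pi_norm v i)

theorem norm_sumElim_le {a : n → ℝ} {b : m → ℝ} {B : ℝ} (ha : ‖a‖ ≤ B) (hb : ‖b‖ ≤ B) :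
    ‖Sum.elim a b‖ ≤ B := by
  refine (pi_norm_le_iff_of_nonneg ((norm_nonneg a).trans ha)).2 ?_
  rintro (i | i)
  · exact (norm_le_pi_norm a i).trans ha
  · exact (norm_le_pi_norm b i).trans hb

theorem mem_Icc_of_norm_le {y : n → ℝ} {B : ℝ} (h : ‖y‖ ≤ B) (i : n) : y i ∈ Set.Icc (-B) B :=
  abs_le.mp ((norm_le_pi_norm y i).trans h)

end Relu

namespace RNN

variable {ι κ κ' ω : Type} [Fintype ι] [Fintype κ] [Fintype κ']

theorem hid_eq_of_step (R : RNN ι κ ω) (x : ι → ℝ) {S : ℕ → κ → ℝ}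
    (h0 : relu (R.Ax *ᵥ x + R.bh) = S 0) (hstep : ∀ t, relu (R.Ah *ᵥ S t + R.bh) = S (t + 1))
    (t : ℕ) : R.hid x t = S t := by
  induction t with
  | zero => exact h0
  | succ t ih => rw [← hstep, ← ih]; rfl

def reindex (R : RNN ι κ ω) (e : κ ≃ κ') : RNN ι κ' ω where
  Ah := Matrix.reindex e e R.Ah
  Ax := Matrix.reindex e (Equiv.refl ι) R.Ax
  Ao := Matrix.reindex (Equiv.refl ω) e R.Ao
  bh := R.bh ∘ e.symm
  bo := R.bo

variable (R : RNN ι κ ω) (e : κ ≃ κ') (x : ι → ℝ) (t : ℕ)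

theorem hid_reindex : (R.reindex e).hid x t = R.hid x t ∘ e.symm := by
  induction t with
  | zero => rfl
  | succ t ih =>
    change relu ((R.reindex e).Ah *ᵥ (R.reindex e).hid x t + (R.reindex e).bh) = _
    rw [ih]
    simp only [reindex, reindex_apply, submatrix_mulVec_equiv, Equiv.symm_symm,
      Function.comp_assoc, Equiv.symm_comp_self, Function.comp_id]
    rfl

theorem mulVec_hid_reindex {m : Type} (P : Matrix m κ ℝ) :
    Matrix.reindex (Equiv.refl m) e P *ᵥ (R.reindex e).hid x t = P *ᵥ R.hid x t := by
  simp [hid_reindex, submatrix_mulVec_equiv, Function.comp_assoc]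

theorem out_reindex : (R.reindex e).out x t = R.out x t := by
  rw [out, out, ← mulVec_hid_reindex R e x t]; rfl

theorem norm_hid_reindex_le : ‖(R.reindex e).hid x t‖ ≤ ‖R.hid x t‖ := by
  rw [hid_reindex]
  exact (pi_norm_le_iff_of_nonneg (norm_nonneg _)).2 fun i => norm_le_pi_norm _ (e.symm i)

end RNN

theorem two_pow_sub_two_eq {k : ℕ} (hk : 2 ≤ k) : 2 ^ k - 2 = 2 * (2 ^ (k - 1) - 2) + 2 := by
  obtain ⟨j, rfl⟩ : ∃ j, k = j + 1 := ⟨k - 1, by omega⟩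
  have : 2 ≤ 2 ^ j := Nat.le_self_pow (by omega) 2
  rw [pow_succ, Nat.add_sub_cancel]
  omega

namespace Clock

/-- The number of steps to the next pulse of the clock. -/
def countdown : ℕ → ℕ
  | 0 => 0
  | t + 1 => if countdown t = 0 then t + 1 else countdown t - 1

theorem countdown_succ_of_eq_zero {t : ℕ} (h : countdown t = 0) : countdown (t + 1) = t + 1 := by
  simp [countdown, h]

theorem countdown_succ_of_ne_zero {t : ℕ} (h : countdown t ≠ 0) :
    countdown (t + 1) = countdown t - 1 := by
  simp [countdown, h]

theorem countdown_le (t : ℕ) : countdown t ≤ t := by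
  induction t with
  | zero => rfl
  | succ t ih => unfold countdown; split_ifs <;> omega

theorem countdown_add_of_eq_zero {p : ℕ} (hp : countdown p = 0) {i : ℕ} (hi : i ≤ p + 1) :
    countdown (p + 1 + i) = p + 1 - i := by
  induction i with
  | zero => exact countdown_succ_of_eq_zero hp
  | succ i ih =>
    rw [← add_assoc, countdown_succ_of_ne_zero (by omega), ih (by omega)]
    omega

theorem countdown_two_mul_add_two {p : ℕ} (hp : countdown p = 0) : countdown (2 * p + 2) = 0 := by
  simpa [show 2 * p + 2 = p + 1 + (p + 1) by ring] using countdown_add_of_eq_zero hp le_rfl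

theorem countdown_two_pow_sub_two (k : ℕ) : countdown (2 ^ k - 2) = 0 := by
  induction k with
  | zero => rfl
  | succ k ih =>
    rcases Nat.eq_zero_or_pos k with rfl | hk
    · rfl
    · rw [two_pow_sub_two_eq (by omega), Nat.add_sub_cancel]
      exact countdown_two_mul_add_two ih

noncomputable def pulse (t : ℕ) : ℝ := if countdown t = 0 then 1 else 0

noncomputable def delayedPulse : ℕ → ℝ
  | 0 => 0
  | t + 1 => pulse t

theorem delayedPulse_two_mul_add_two {p : ℕ} (hp : countdown p = 0) :
    delayedPulse (2 * p + 2) = 0 := by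
  have : countdown (p + 1 + p) = 1 := by rw [countdown_add_of_eq_zero hp (by omega)]; omega
  simp [delayedPulse, pulse, show 2 * p + 1 = p + 1 + p by ring, this]

/-- The neurons are: a constant `1`, which cancels the biases after time `0` (the state at time `0`
is the ReLU of the bias), the faller, the riser, the pulse and the delayed pulse. -/
noncomputable def state (t : ℕ) : Fin 5 → ℝ :=
  ![1, (1 / 2) ^ t, 2 * ((1 / 2) ^ countdown t - (1 / 2) ^ t), pulse t, delayedPulse t]

noncomputable def Ah : Matrix (Fin 5) (Fin 5) ℝ :=
  !![0, 0, 0, 0, 0;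
     -1, 1 / 2, 0, 0, 0;
     0, 3, 2, -4, 0;
     -2, 4, 2, -3, 0;
     0, 0, 0, 1, 0]

def bh : Fin 5 → ℝ := ![1, 1, 0, 1, 0]

theorem relu_bh : relu bh = state 0 := by
  ext i; fin_cases i <;> simp [relu, bh, state, pulse, delayedPulse, countdown]

theorem Ah_mulVec_add_bh (v : Fin 5 → ℝ) :
    Ah *ᵥ v + bh = ![1, v 1 / 2 - v 0 + 1, 3 * v 1 + 2 * v 2 - 4 * v 3,
      4 * v 1 + 2 * v 2 - 3 * v 3 - 2 * v 0 + 1, v 3] := by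
  ext i; fin_cases i <;> simp [Ah, bh, dotProduct, Fin.sum_univ_five] <;> ring

theorem riser_succ (t : ℕ) :
    max 0 (4 * (1 / 2 : ℝ) ^ countdown t - (1 / 2) ^ t - 4 * pulse t) =
      2 * ((1 / 2) ^ countdown (t + 1) - (1 / 2) ^ (t + 1)) := by
  by_cases h : countdown t = 0
  · rw [countdown_succ_of_eq_zero h, pulse, if_pos h, h, sub_self, mul_zero]
    have : (0 : ℝ) ≤ (1 / 2) ^ t := by positivity
    exact max_eq_left (by linarith)
  · obtain ⟨d, hd⟩ : ∃ d, countdown t = d + 1 := ⟨countdown t - 1, by omega⟩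
    have hdt : d ≤ t + 1 := by have := countdown_le t; omega
    rw [countdown_succ_of_ne_zero h, pulse, if_neg h, hd, Nat.add_sub_cancel]
    have hmono : (1 / 2 : ℝ) ^ (t + 1) ≤ (1 / 2) ^ d :=
      pow_le_pow_of_le_one (by norm_num) (by norm_num) hdt
    have hval : 4 * (1 / 2 : ℝ) ^ (d + 1) - (1 / 2) ^ t - 4 * 0 =
        2 * ((1 / 2) ^ d - (1 / 2) ^ (t + 1)) := by ring
    rw [hval, max_eq_right (by linarith)]

theorem pulse_succ (t : ℕ) :
    max 0 (4 * (1 / 2 : ℝ) ^ countdown t - 3 * pulse t - 1) = pulse (t + 1) := by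
  unfold pulse
  rcases Nat.lt_trichotomy (countdown t) 1 with h | h | h
  · have h0 : countdown t = 0 := by omega
    norm_num [h0, countdown_succ_of_eq_zero h0]
  · norm_num [h, countdown_succ_of_ne_zero (show countdown t ≠ 0 by omega)]
  · have hsmall : (1 / 2 : ℝ) ^ countdown t ≤ 1 / 4 := by
      calc (1 / 2 : ℝ) ^ countdown t ≤ (1 / 2) ^ 2 :=
            pow_le_pow_of_le_one (by norm_num) (by norm_num) h
        _ = 1 / 4 := by norm_num
    rw [if_neg (by omega), if_neg (by rw [countdown_succ_of_ne_zero (by omega)]; omega)]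
    exact max_eq_left (by linarith)

theorem relu_Ah_mulVec_state_add_bh (t : ℕ) : relu (Ah *ᵥ state t + bh) = state (t + 1) := by
  rw [Ah_mulVec_add_bh]
  ext i
  fin_cases i <;> simp only [relu, state, Fin.reduceFinMk, Matrix.cons_val]
  · simp
  · rw [sub_add_cancel, max_eq_right (by positivity)]; ring
  · rw [← riser_succ]; ring_nf
  · rw [← pulse_succ]; ring_nf
  · simp only [delayedPulse, pulse]; split_ifs <;> norm_num

theorem norm_state_le (t : ℕ) : ‖state t‖ ≤ 2 := by
  have hpulse : ∀ s, |pulse s| ≤ 2 := fun s => by unfold pulse; split_ifs <;> norm_num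
  have hle : ∀ n : ℕ, (1 / 2 : ℝ) ^ n ≤ 1 := fun n => pow_le_one₀ (by norm_num) (by norm_num)
  refine (pi_norm_le_iff_of_nonneg (by norm_num)).2 fun i => ?_
  rw [Real.norm_eq_abs]
  fin_cases i <;> simp only [state, Fin.reduceFinMk, Matrix.cons_val]
  · norm_num
  · rw [abs_of_nonneg (by positivity)]; linarith [hle t]
  · have hmono : (1 / 2 : ℝ) ^ t ≤ (1 / 2) ^ countdown t :=
      pow_le_pow_of_le_one (by norm_num) (by norm_num) (countdown_le t)
    have hnn : (0 : ℝ) ≤ (1 / 2) ^ t := by positivity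
    rw [abs_of_nonneg (by linarith)]
    linarith [hle (countdown t)]
  · exact hpulse t
  · cases t
    · simp [delayedPulse]
    · exact hpulse _

def cols {m : Type} (a c e : m → ℝ) : Matrix m (Fin 5) ℝ :=
  Matrix.of fun i => ![a i, 0, 0, c i, e i]

theorem cols_mulVec_state {m : Type} (a c e : m → ℝ) (t : ℕ) :
    cols a c e *ᵥ state t = a + pulse t • c + delayedPulse t • e := by
  ext i
  simp only [mulVec, dotProduct, cols, of_apply, state, Fin.sum_univ_five, Fin.isValue,
    cons_val_zero, cons_val, Pi.add_apply, Pi.smul_apply, smul_eq_mul]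
  ring

theorem relu_gate {m : Type} [Fintype m] (t : ℕ) {y : m → ℝ} {C : ℝ} (hy : ‖y‖ ≤ C) :
    relu (y - (fun _ => C) + pulse t • fun _ => C) = relu (if countdown t = 0 then y else 0) := by
  by_cases hp : countdown t = 0
  · simp [pulse, hp]
  · rw [if_neg hp, relu_zero, relu_of_nonpos]
    intro i
    simpa [pulse, hp] using (le_abs_self (y i)).trans (hy.trans' (norm_le_pi_norm y i))

end Clock

open Clock

namespace RNN

section Blocks

variable {ι κf ω κg ω' : Type} [Fintype ι] [Fintype κf] [Fintype ω] [Fintype κg]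
variable (Rf : RNN ι κf ω) (Rg : RNN ω κg ω') (x : ι → ℝ)

noncomputable def sampledOutput : ℕ → ω → ℝ
  | 0 => 0
  | t + 1 => if countdown t = 0 then Rf.out x t else 0

noncomputable def restartedHid : ℕ → κg → ℝ
  | 0 => Rg.hid 0 0
  | t + 1 =>
    if countdown t = 0 then 0
    else relu (Rg.Ah *ᵥ restartedHid t + Rg.Ax *ᵥ Rf.sampledOutput x t + Rg.bh)

variable {Rf x}

theorem restartedHid_add_of_countdown_eq_zero {p : ℕ} (hp : countdown p = 0) {i : ℕ}
    (hi : i ≤ p) : Rf.restartedHid Rg x (p + 2 + i) = Rg.hid (Rf.out x p) i := by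
  induction i with
  | zero => simp [restartedHid, sampledOutput, hp, countdown_succ_of_eq_zero hp, hid]
  | succ i ih =>
    have hrun : countdown (p + 2 + i) ≠ 0 := by
      rw [show p + 2 + i = p + 1 + (i + 1) by ring, countdown_add_of_eq_zero hp (by omega)]
      omega
    have hsample : countdown (p + 1 + i) ≠ 0 := by
      rw [countdown_add_of_eq_zero hp (by omega)]; omega
    rw [← add_assoc, restartedHid, if_neg hrun, ih (by omega),
      show p + 2 + i = p + 1 + i + 1 by ring, sampledOutput, if_neg hsample]
    simp [hid]

theorem restartedHid_two_mul_add_two {p : ℕ} (hp : countdown p = 0) :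
    Rf.restartedHid Rg x (2 * p + 2) = Rg.hid (Rf.out x p) p := by
  rw [show 2 * p + 2 = p + 2 + p by ring, restartedHid_add_of_countdown_eq_zero Rg hp le_rfl]

variable {Bf : ℝ} (hBf : 0 ≤ Bf) (hout : ∀ t, ‖Rf.out x t‖ ≤ Bf)
include hBf hout

theorem norm_sampledOutput_le (t : ℕ) : ‖Rf.sampledOutput x t‖ ≤ Bf := by
  cases t with
  | zero => simpa [sampledOutput] using hBf
  | succ t => simp only [sampledOutput]; split_ifs <;> simp [hout, hBf]

theorem restartedHid_cases (t : ℕ) :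
    (delayedPulse t = 1 ∧ Rf.restartedHid Rg x t = 0) ∨
      (delayedPulse t = 0 ∧ ∃ y, ‖y‖ ≤ Bf ∧ ∃ s, Rf.restartedHid Rg x t = Rg.hid y s) := by
  induction t with
  | zero => exact Or.inr ⟨rfl, 0, by simpa using hBf, 0, rfl⟩
  | succ t ih =>
    by_cases hp : countdown t = 0
    · left; simp [delayedPulse, pulse, restartedHid, hp]
    · right
      refine ⟨by simp [delayedPulse, pulse, hp], ?_⟩
      rcases ih with ⟨hq, -⟩ | ⟨hq, y, hy, s, hg⟩
      · cases t with
        | zero => simp [delayedPulse] at hq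
        | succ t =>
          have ht : countdown t = 0 := by
            by_contra h; simp [delayedPulse, pulse, h] at hq
          exact ⟨Rf.out x t, hout t, 0, by simp [restartedHid, hp, sampledOutput, ht, hid]⟩
      · have hu : Rf.sampledOutput x t = 0 := by
          cases t with
          | zero => rfl
          | succ t =>
            by_cases ht : countdown t = 0 <;> simp_all [delayedPulse, pulse, sampledOutput]
        exact ⟨y, hy, s + 1, by simp [restartedHid, hp, hg, hu, hid]⟩

theorem norm_restartedHid_le {Bhg : ℝ} (hBhg : 0 ≤ Bhg)
    (hhid : ∀ y, ‖y‖ ≤ Bf → ∀ s, ‖Rg.hid y s‖ ≤ Bhg) (t : ℕ) :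
    ‖Rf.restartedHid Rg x t‖ ≤ Bhg := by
  rcases restartedHid_cases Rg hBf hout t with ⟨-, hg⟩ | ⟨-, y, hy, s, hg⟩
  · simpa [hg] using hBhg
  · exact hg ▸ hhid y hy s

theorem exists_restartedHid_add_delayedPulse_eq (t : ℕ) :
    ∃ y, ‖y‖ ≤ Bf ∧ ∃ s, Rf.restartedHid Rg x t + delayedPulse t • Rg.hid 0 0 = Rg.hid y s := by
  rcases restartedHid_cases Rg hBf hout t with ⟨hq, hg⟩ | ⟨hq, y, hy, s, hg⟩
  · exact ⟨0, by simpa using hBf, 0, by simp [hq, hg]⟩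
  · exact ⟨y, hy, s, by simp [hq, hg]⟩

end Blocks

section Concat

variable {ι κf ω κg ω' : Type} [Fintype ι] [Fintype κf] [Fintype ω] [Fintype κg]
variable (Rf : RNN ι κf ω) (Rg : RNN ω κg ω') (Bf Bhg : ℝ)

attribute [local instance] Matrix.linftyOpNormedAddCommGroup

noncomputable def resetThreshold : ℝ := ‖Rg.Ah‖ * Bhg + ‖Rg.Ax‖ * Bf + ‖Rg.bh‖

variable {Rg Bf Bhg} in
theorem le_resetThreshold {g : κg → ℝ} {u : ω → ℝ} (hg : ‖g‖ ≤ Bhg) (hu : ‖u‖ ≤ Bf) (i : κg) :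
    (Rg.Ah *ᵥ g + Rg.Ax *ᵥ u + Rg.bh) i ≤ Rg.resetThreshold Bf Bhg := by
  calc (Rg.Ah *ᵥ g + Rg.Ax *ᵥ u + Rg.bh) i ≤ ‖Rg.Ah *ᵥ g + Rg.Ax *ᵥ u + Rg.bh‖ :=
        (le_abs_self _).trans (norm_le_pi_norm (Rg.Ah *ᵥ g + Rg.Ax *ᵥ u + Rg.bh) i)
    _ ≤ ‖Rg.Ah *ᵥ g‖ + ‖Rg.Ax *ᵥ u‖ + ‖Rg.bh‖ := norm_add₃_le
    _ ≤ ‖Rg.Ah‖ * Bhg + ‖Rg.Ax‖ * Bf + ‖Rg.bh‖ := by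
        gcongr
        · exact (linfty_opNorm_mulVec _ _).trans (by gcongr)
        · exact (linfty_opNorm_mulVec _ _).trans (by gcongr)

/-- The hidden state consists of the clock, the `R^f` block, the `R^g` block and the two gates.
The gates take the bias of `R^f` through the constant clock neuron, so that they start at `0`;
one step after a pulse the `R^g` block is `0`, and the output adds back what `R^g` would output from
its state `Rg.hid 0 0`. -/
noncomputable def clockedConcat : RNN ι (Fin 5 ⊕ κf ⊕ κg ⊕ ω ⊕ ω) ω' where
  Ah :=
    fromRows (fromCols Clock.Ah 0) <|
    fromRows (fromCols 0 <| fromCols Rf.Ah 0) <|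
    fromRows (fromCols (cols 0 (fun _ => -Rg.resetThreshold Bf Bhg) 0) <|
      fromCols 0 <| fromCols Rg.Ah <| fromCols Rg.Ax (-Rg.Ax)) <|
    fromRows (fromCols (cols (Rf.bo - fun _ => Bf) (fun _ => Bf) 0) <| fromCols Rf.Ao 0) <|
    fromCols (cols (-Rf.bo - fun _ => Bf) (fun _ => Bf) 0) <| fromCols (-Rf.Ao) 0
  Ax := fromRows 0 <| fromRows Rf.Ax 0
  Ao := fromCols (cols 0 0 (Rg.Ao *ᵥ Rg.hid 0 0)) <| fromCols 0 <| fromCols Rg.Ao 0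
  bh := Sum.elim Clock.bh <| Sum.elim Rf.bh <| Sum.elim Rg.bh 0
  bo := Rg.bo

variable (x : ι → ℝ)

noncomputable def clockedConcatState (t : ℕ) : Fin 5 ⊕ κf ⊕ κg ⊕ ω ⊕ ω → ℝ :=
  Sum.elim (Clock.state t) <| Sum.elim (Rf.hid x t) <| Sum.elim (Rf.restartedHid Rg x t) <|
    Sum.elim (relu (Rf.sampledOutput x t)) (relu (-Rf.sampledOutput x t))

theorem relu_clockedConcat_Ax_mulVec_add_bh :
    relu ((Rf.clockedConcat Rg Bf Bhg).Ax *ᵥ x + (Rf.clockedConcat Rg Bf Bhg).bh) =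
      Rf.clockedConcatState Rg x 0 := by
  simp only [clockedConcat, clockedConcatState, fromRows_mulVec, zero_mulVec,
    ← Sum.elim_add_add, relu_sumElim]
  simp [relu_sumElim, relu_bh, relu_zero, sampledOutput, restartedHid, hid]

variable {Rf Rg Bf Bhg x} (hBf : 0 ≤ Bf) (hBhg : 0 ≤ Bhg) (hout : ∀ t, ‖Rf.out x t‖ ≤ Bf)
  (hhid : ∀ y, ‖y‖ ≤ Bf → ∀ s, ‖Rg.hid y s‖ ≤ Bhg)

include hBf hout in
theorem relu_restartedHid_sub_resetThreshold {t : ℕ} (hg : ‖Rf.restartedHid Rg x t‖ ≤ Bhg) :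
    relu (Rg.Ah *ᵥ Rf.restartedHid Rg x t + Rg.Ax *ᵥ Rf.sampledOutput x t + Rg.bh -
      pulse t • fun _ => Rg.resetThreshold Bf Bhg) = Rf.restartedHid Rg x (t + 1) := by
  by_cases hp : countdown t = 0
  · rw [restartedHid, if_pos hp, relu_of_nonpos]
    intro i
    simpa [pulse, hp] using le_resetThreshold hg (norm_sampledOutput_le hBf hout t) i
  · simp [restartedHid, hp, pulse]

include hBf hBhg hout hhid

theorem relu_clockedConcat_Ah_mulVec_add_bh (t : ℕ) :
    relu ((Rf.clockedConcat Rg Bf Bhg).Ah *ᵥ Rf.clockedConcatState Rg x t +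
      (Rf.clockedConcat Rg Bf Bhg).bh) = Rf.clockedConcatState Rg x (t + 1) := by
  simp only [clockedConcat, clockedConcatState, fromRows_mulVec, fromCols_mulVec_sumElim,
    zero_mulVec, ← Sum.elim_add_add, relu_sumElim, cols_mulVec_state, add_zero, zero_add,
    smul_zero]
  refine congrArg₂ Sum.elim (relu_Ah_mulVec_state_add_bh t) (congrArg₂ Sum.elim rfl
    (congrArg₂ Sum.elim ?_ (congrArg₂ Sum.elim ?_ ?_)))
  · rw [← relu_restartedHid_sub_resetThreshold hBf hout
      (norm_restartedHid_le Rg hBf hout hBhg hhid t)]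
    congr 1
    rw [neg_mulVec, ← sub_eq_add_neg, ← mulVec_sub, relu_sub_relu_neg]
    ext i
    simp only [Pi.add_apply, Pi.sub_apply, Pi.smul_apply, smul_eq_mul]
    ring
  · rw [show Rf.sampledOutput x (t + 1) = if countdown t = 0 then Rf.out x t else 0 from rfl,
      ← relu_gate t (hout t)]
    congr 1
    ext i
    simp only [out, Pi.add_apply, Pi.sub_apply, Pi.smul_apply, smul_eq_mul]
    ring
  · rw [show -Rf.sampledOutput x (t + 1) = if countdown t = 0 then -Rf.out x t else 0 by
        simp only [sampledOutput]; split_ifs <;> simp,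
      ← relu_gate t (C := Bf) (by rw [norm_neg]; exact hout t)]
    congr 1
    ext i
    simp only [out, Pi.add_apply, Pi.sub_apply, Pi.neg_apply, Pi.smul_apply, smul_eq_mul,
      neg_mulVec]
    ring

theorem clockedConcat_hid (t : ℕ) :
    (Rf.clockedConcat Rg Bf Bhg).hid x t = Rf.clockedConcatState Rg x t :=
  hid_eq_of_step _ x (relu_clockedConcat_Ax_mulVec_add_bh Rf Rg Bf Bhg x)
    (relu_clockedConcat_Ah_mulVec_add_bh hBf hBhg hout hhid) t

theorem clockedConcat_out (t : ℕ) :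
    (Rf.clockedConcat Rg Bf Bhg).out x t =
      Rg.Ao *ᵥ (Rf.restartedHid Rg x t + delayedPulse t • Rg.hid 0 0) + Rg.bo := by
  rw [out, clockedConcat_hid hBf hBhg hout hhid]
  simp [clockedConcat, clockedConcatState, cols_mulVec_state, mulVec_add, mulVec_smul, add_comm]

theorem clockedConcat_out_two_mul_add_two {p : ℕ} (hp : countdown p = 0) :
    (Rf.clockedConcat Rg Bf Bhg).out x (2 * p + 2) = Rg.out (Rf.out x p) p := by
  rw [clockedConcat_out hBf hBhg hout hhid, delayedPulse_two_mul_add_two hp, zero_smul, add_zero,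
    restartedHid_two_mul_add_two Rg hp]
  rfl

theorem exists_clockedConcat_out_eq (t : ℕ) :
    ∃ y, ‖y‖ ≤ Bf ∧ ∃ s, (Rf.clockedConcat Rg Bf Bhg).out x t = Rg.out y s := by
  obtain ⟨y, hy, s, hys⟩ := exists_restartedHid_add_delayedPulse_eq Rg hBf hout t
  exact ⟨y, hy, s, by rw [clockedConcat_out hBf hBhg hout hhid, hys, out]⟩

theorem norm_clockedConcat_hid_le {Bhf : ℝ} (hf : ∀ t, ‖Rf.hid x t‖ ≤ Bhf) (t : ℕ) :
    ‖(Rf.clockedConcat Rg Bf Bhg).hid x t‖ ≤ max (max 2 Bf) (max Bhg Bhf) := by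
  have hs := norm_sampledOutput_le hBf hout t
  rw [clockedConcat_hid hBf hBhg hout hhid]
  refine norm_sumElim_le ((norm_state_le t).trans (by simp)) <|
    norm_sumElim_le ((hf t).trans (by simp)) <|
    norm_sumElim_le ((norm_restartedHid_le Rg hBf hout hBhg hhid t).trans (by simp)) <|
    norm_sumElim_le ((norm_relu_le _).trans (hs.trans (by simp))) <|
      (norm_relu_le _).trans ((norm_neg _).trans_le (hs.trans (by simp)))

theorem fromCols_mulVec_clockedConcat_hid_eq_hid [DecidableEq κf] (t : ℕ) :
    fromCols (0 : Matrix κf (Fin 5) ℝ) (fromCols 1 0) *ᵥ (Rf.clockedConcat Rg Bf Bhg).hid x t =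
      Rf.hid x t := by
  simp [clockedConcat_hid hBf hBhg hout hhid, clockedConcatState]

theorem fromCols_mulVec_clockedConcat_hid_eq_restartedHid [DecidableEq κg] (t : ℕ) :
    fromCols (0 : Matrix κg (Fin 5) ℝ) (fromCols (0 : Matrix κg κf ℝ) (fromCols 1 0)) *ᵥ
      (Rf.clockedConcat Rg Bf Bhg).hid x t = Rf.restartedHid Rg x t := by
  simp [clockedConcat_hid hBf hBhg hout hhid, clockedConcatState]

end Concat

end RNN

theorem stmt8_general (df d'f mf mg d'g : ℕ) (D Bf Bhg : ℝ)
    (hBf : 0 < Bf) (hBhg : 0 < Bhg)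
    (Rf : RNN (Fin df) (Fin mf) (Fin d'f)) (Rg : RNN (Fin d'f) (Fin mg) (Fin d'g))
    (hA1 : ∀ x : Fin df → ℝ, (∀ i, x i ∈ Set.Icc (-D) D) → ∀ t : ℕ, ‖Rf.out x t‖ ≤ Bf)
    (hA2 : ∀ y : Fin d'f → ℝ, (∀ i, y i ∈ Set.Icc (-Bf) Bf) → ∀ t : ℕ, ‖Rg.hid y t‖ ≤ Bhg) :
    ∃ R : RNN (Fin df) (Fin (mf + 2 * d'f + mg + 5)) (Fin d'g),
      -- (i) clocked composition of the two networks
      (∀ x : Fin df → ℝ, (∀ i, x i ∈ Set.Icc (-D) D) → ∀ k : ℕ, 3 ≤ k →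
        R.out x (2 ^ k - 2) = Rg.out (Rf.out x (2 ^ (k - 1) - 2)) (2 ^ (k - 1) - 2)) ∧
      -- (ii) readout matrices for the two sub-hidden-states
      (∃ (M : Matrix (Fin mf) (Fin (mf + 2 * d'f + mg + 5)) ℝ)
         (W : Matrix (Fin mg) (Fin (mf + 2 * d'f + mg + 5)) ℝ),
        ∀ x : Fin df → ℝ, (∀ i, x i ∈ Set.Icc (-D) D) →
          (∀ t : ℕ, M.mulVec (R.hid x t) = Rf.hid x t) ∧
          (∀ k : ℕ, 3 ≤ k →
            W.mulVec (R.hid x (2 ^ k - 2)) =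
              Rg.hid (Rf.out x (2 ^ (k - 1) - 2)) (2 ^ (k - 1) - 2))) ∧
      -- (iii) boundedness of the hidden state and the output
      (∀ Bhf Bg : ℝ, 0 < Bhf → 0 < Bg →
        (∀ x : Fin df → ℝ, (∀ i, x i ∈ Set.Icc (-D) D) → ∀ t : ℕ, ‖Rf.hid x t‖ ≤ Bhf) →
        (∀ y : Fin d'f → ℝ, (∀ i, y i ∈ Set.Icc (-Bf) Bf) → ∀ t : ℕ, ‖Rg.out y t‖ ≤ Bg) →
        ∀ x : Fin df → ℝ, (∀ i, x i ∈ Set.Icc (-D) D) → ∀ t : ℕ,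
          ‖R.hid x t‖ ≤ max (max 2 Bf) (max Bhg Bhf) ∧ ‖R.out x t‖ ≤ Bg) := by
  have hhid : ∀ y : Fin d'f → ℝ, ‖y‖ ≤ Bf → ∀ s, ‖Rg.hid y s‖ ≤ Bhg :=
    fun y hy => hA2 y (mem_Icc_of_norm_le hy)
  have hcard : Fintype.card (Fin 5 ⊕ Fin mf ⊕ Fin mg ⊕ Fin d'f ⊕ Fin d'f) =
      mf + 2 * d'f + mg + 5 := by
    simp only [Fintype.card_sum, Fintype.card_fin]; ring
  set e := Fintype.equivFinOfCardEq hcard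
  refine ⟨(Rf.clockedConcat Rg Bf Bhg).reindex e, fun x hx k hk => ?_,
    ⟨reindex (Equiv.refl _) e (fromCols 0 (fromCols 1 0)),
      reindex (Equiv.refl _) e (fromCols 0 (fromCols 0 (fromCols 1 0))),
      fun x hx => ⟨fun t => ?_, fun k hk => ?_⟩⟩, fun Bhf Bg _ _ hf hg x hx t => ⟨?_, ?_⟩⟩
  · rw [RNN.out_reindex, two_pow_sub_two_eq (by omega), RNN.clockedConcat_out_two_mul_add_two
      hBf.le hBhg.le (hA1 x hx) hhid (countdown_two_pow_sub_two _)]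
  · rw [RNN.mulVec_hid_reindex,
      RNN.fromCols_mulVec_clockedConcat_hid_eq_hid hBf.le hBhg.le (hA1 x hx) hhid]
  · rw [RNN.mulVec_hid_reindex, two_pow_sub_two_eq (by omega),
      RNN.fromCols_mulVec_clockedConcat_hid_eq_restartedHid hBf.le hBhg.le (hA1 x hx) hhid,
      RNN.restartedHid_two_mul_add_two Rg (countdown_two_pow_sub_two _)]
  · exact (RNN.norm_hid_reindex_le _ _ _ _).trans
      (RNN.norm_clockedConcat_hid_le hBf.le hBhg.le (hA1 x hx) hhid (hf x hx) t)
  · obtain ⟨y, hy, s, hys⟩ :=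
      RNN.exists_clockedConcat_out_eq hBf.le hBhg.le (hA1 x hx) hhid t
    rw [RNN.out_reindex, hys]
    exact hg y (mem_Icc_of_norm_le hy) s

/-- Theorem (clocked concatenation): given RNNs `R^f` (input dim `d_f`, hidden `m_f`,
output `d'_f`) and `R^g` (input dim `d'_f`, hidden `m_g`, output `d'_g`) with
(A1) `‖(R^f 𝒟 x)[t]‖∞ ≤ B_f` on `[−D,D]^{d_f}` and
(A2) `‖(K^g 𝒟 y)[t]‖∞ ≤ B_{h,g}` on `[−B_f,B_f]^{d'_f}`, there is an RNN `R` with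
input dim `d_f`, hidden state size `m_f + 2d'_f + m_g + 5`, output dim `d'_g` with
properties (i)–(iii) below. -/
theorem stmt8 (df d'f mf mg d'g : ℕ) (D Bf Bhg : ℝ)
    (hD : 0 < D) (hBf : 0 < Bf) (hBhg : 0 < Bhg)
    (Rf : RNN (Fin df) (Fin mf) (Fin d'f)) (Rg : RNN (Fin d'f) (Fin mg) (Fin d'g))
    (hA1 : ∀ x : Fin df → ℝ, (∀ i, x i ∈ Set.Icc (-D) D) → ∀ t : ℕ, ‖Rf.out x t‖ ≤ Bf)
    (hA2 : ∀ y : Fin d'f → ℝ, (∀ i, y i ∈ Set.Icc (-Bf) Bf) → ∀ t : ℕ, ‖Rg.hid y t‖ ≤ Bhg) :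
    ∃ R : RNN (Fin df) (Fin (mf + 2 * d'f + mg + 5)) (Fin d'g),
      -- (i) clocked composition of the two networks
      (∀ x : Fin df → ℝ, (∀ i, x i ∈ Set.Icc (-D) D) → ∀ k : ℕ, 3 ≤ k →
        R.out x (2 ^ k - 2) = Rg.out (Rf.out x (2 ^ (k - 1) - 2)) (2 ^ (k - 1) - 2)) ∧
      -- (ii) readout matrices for the two sub-hidden-states
      (∃ (M : Matrix (Fin mf) (Fin (mf + 2 * d'f + mg + 5)) ℝ)
         (W : Matrix (Fin mg) (Fin (mf + 2 * d'f + mg + 5)) ℝ),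
        ∀ x : Fin df → ℝ, (∀ i, x i ∈ Set.Icc (-D) D) →
          (∀ t : ℕ, M.mulVec (R.hid x t) = Rf.hid x t) ∧
          (∀ k : ℕ, 3 ≤ k →
            W.mulVec (R.hid x (2 ^ k - 2)) =
              Rg.hid (Rf.out x (2 ^ (k - 1) - 2)) (2 ^ (k - 1) - 2))) ∧
      -- (iii) boundedness of the hidden state and the output
      (∀ Bhf Bg : ℝ, 0 < Bhf → 0 < Bg →
        (∀ x : Fin df → ℝ, (∀ i, x i ∈ Set.Icc (-D) D) → ∀ t : ℕ, ‖Rf.hid x t‖ ≤ Bhf) →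
        (∀ y : Fin d'f → ℝ, (∀ i, y i ∈ Set.Icc (-Bf) Bf) → ∀ t : ℕ, ‖Rg.out y t‖ ≤ Bg) →
        ∀ x : Fin df → ℝ, (∀ i, x i ∈ Set.Icc (-D) D) → ∀ t : ℕ,
          ‖R.hid x t‖ ≤ max (max 2 Bf) (max Bhg Bhf) ∧ ‖R.out x t‖ ≤ Bg) :=
  stmt8_general df d'f mf mg d'g D Bf Bhg hBf hBhg Rf Rg hA1 hA2
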